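/- arXiv:2502.07765 — 2 statements merged into one kernel-verified Lean document; each statement's English description precedes it below -/
import Mathlib

section
/- In the real/complex cone setup, every ℓ ∈ 𝒞'_ℂ satisfies ‖ℓ‖' ≤ √2 |ℓ(𝕖)|, where ‖ℓ‖' is the operator norm of ℓ on B_ℂ. -/
/-! If `‖ℓ p‖ > ‖ℓ (𝕖, 𝕖)‖` for some `p` with `cNorm p ≤ 1`, then `q = -(ℓ (𝕖, 𝕖) / ℓ p) p` has
`rNorm q < 1` and `ℓ ((𝕖, 𝕖) + q) = 0`. But the open unit ball around `𝕖` lies in `𝒞_ℝ`, so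
`(𝕖, 𝕖) + q ∈ 𝒞_ℂ`, contradicting `ℓ ∈ 𝒞'_ℂ`. Finally `ℓ (𝕖, 𝕖) = (1 + i) ℓ (𝕖, 0)`. -/

open Complex Set ENNReal

namespace ConeSetup

variable {B : Type*} [NormedAddCommGroup B] [NormedSpace ℝ B]

/-- Complex scalar multiplication on the complexification `B × B`:
`(a+ib)(x,y) = (ax − by, ay + bx)`. -/
def cSmul (z : ℂ) (p : B × B) : B × B :=
  (z.re • p.1 - z.im • p.2, z.re • p.2 + z.im • p.1)

/-- The "real" norm `‖(x,y)‖_r = √(‖x‖² + ‖y‖²)` on the complexification. -/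
noncomputable def rNorm (p : B × B) : ℝ :=
  Real.sqrt (‖p.1‖ ^ 2 + ‖p.2‖ ^ 2)

/-- The complexification norm `‖(x,y)‖ = sup_{θ∈[0,2π]} ‖e^{iθ}(x,y)‖_r`. -/
noncomputable def cNorm (p : B × B) : ℝ :=
  sSup ((fun θ : ℝ => rNorm (cSmul (Complex.exp (θ * Complex.I)) p)) ''
    Set.Icc 0 (2 * Real.pi))

/-- The real cone `𝒞_ℝ = {h ≠ 0 : ℓ(h) ≥ 0 for all ℓ ∈ S}`. -/
def realCone (S : Set (B →L[ℝ] ℝ)) : Set B :=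
  {h | h ≠ 0 ∧ ∀ ℓ ∈ S, 0 ≤ ℓ h}

/-- The complex cone `𝒞_ℂ = ℂ_* ⋅ (𝒞_ℝ + i 𝒞_ℝ)`. -/
def complexCone (S : Set (B →L[ℝ] ℝ)) : Set (B × B) :=
  {p | ∃ z : ℂ, z ≠ 0 ∧ ∃ x ∈ realCone S, ∃ y ∈ realCone S, p = cSmul z (x, y)}

/-- A map `B × B → ℂ` is a (continuous) complex-linear functional for the complex
structure `cSmul`. -/
def IsCLinearFunctional (ℓ : B × B → ℂ) : Prop :=
  (∀ p q : B × B, ℓ (p + q) = ℓ p + ℓ q) ∧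
  (∀ (z : ℂ) (p : B × B), ℓ (cSmul z p) = z * ℓ p) ∧
  Continuous ℓ

/-- The dual real cone `𝒞'_ℝ = {ℓ ∈ B'_ℝ : ℓ(h) ≥ 0 for all h ∈ 𝒞_ℝ}`. -/
def dualRealCone (S : Set (B →L[ℝ] ℝ)) : Set (B →L[ℝ] ℝ) :=
  {ℓ | ∀ h ∈ realCone S, 0 ≤ ℓ h}

/-- The dual complex cone `𝒞'_ℂ = {ℓ ∈ B'_ℂ : ℓ(h) ≠ 0 for all h ∈ 𝒞_ℂ}`. -/
def dualComplexCone (S : Set (B →L[ℝ] ℝ)) : Set (B × B → ℂ) :=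
  {ℓ | IsCLinearFunctional ℓ ∧ ∀ h ∈ complexCone S, ℓ h ≠ 0}

/-- The action of a real functional on the complexification: `ℓ(x+iy) = ℓ(x) + iℓ(y)`. -/
noncomputable def cext (ℓ : B →L[ℝ] ℝ) (p : B × B) : ℂ :=
  (ℓ p.1 : ℂ) + (ℓ p.2 : ℂ) * Complex.I

/-- `𝒞̊'_ℝ = {ℓ ∈ 𝒞'_ℝ : ℓ(x) > 0 for all x ∈ 𝒞_ℝ}`. -/
def interiorDualRealCone (S : Set (B →L[ℝ] ℝ)) : Set (B →L[ℝ] ℝ) :=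
  {ℓ | ℓ ∈ dualRealCone S ∧ ∀ x ∈ realCone S, 0 < ℓ x}

/-- `Ĉ'_ℂ = {±ℓ ± ip : ℓ, p ∈ 𝒞̊'_ℝ}`. -/
def hatDualComplexCone (S : Set (B →L[ℝ] ℝ)) : Set (B × B → ℂ) :=
  {q | ∃ ℓ ∈ interiorDualRealCone S, ∃ p ∈ interiorDualRealCone S,
    ∃ ε₁ ∈ ({1, -1} : Set ℝ), ∃ ε₂ ∈ ({1, -1} : Set ℝ),
      q = fun v => (ε₁ : ℂ) * cext ℓ v + (ε₂ : ℂ) * Complex.I * cext p v}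

/-- `E_𝒞(h,g) = {ℓ(h)/ℓ(g) : ℓ ∈ 𝒞'_ℂ}`. -/
def gaugeSet (S : Set (B →L[ℝ] ℝ)) (h g : B × B) : Set ℂ :=
  {z | ∃ ℓ ∈ dualComplexCone S, z = ℓ h / ℓ g}

/-- The projective gauge
`δ_𝒞(h,g) = ln( sup_{z∈E_𝒞(h,g)} |z| / inf_{z∈E_𝒞(h,g)} |z| ) = sup_{z,w∈E_𝒞(h,g)} ln|z/w|`,
valued in `[0,∞]`. -/
noncomputable def deltaGauge (S : Set (B →L[ℝ] ℝ)) (h g : B × B) : ℝ≥0∞ :=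
  ⨆ z ∈ gaugeSet S h g, ⨆ w ∈ gaugeSet S h g, ENNReal.ofReal (Real.log (‖z‖ / ‖w‖))

/-- The real/complex cone setup: a separating family `S` of functionals, an order unit `𝕖`
whose cone norm is the norm of `B`, and a functional `𝕞` in the weak-* closed convex hull
of `ℝ₊ ⋅ S` dominating the norm on the cone. -/
structure Setup (B : Type*) [NormedAddCommGroup B] [NormedSpace ℝ B] where
  S : Set (B →L[ℝ] ℝ)
  e : B
  mm : B →L[ℝ] ℝ
  κ : ℝ
  separating : ∀ x : B, (∀ ℓ ∈ S, ℓ x = 0) → x = 0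
  e_mem : e ∈ realCone S
  arch : ∀ h : B, ∃ l : ℝ, 0 ≤ l ∧ ∀ ℓ ∈ S, 0 ≤ ℓ (l • e - h)
  norm_eq : ∀ h : B,
    ‖h‖ = sInf {l : ℝ | 0 ≤ l ∧ ∀ ℓ ∈ S, 0 ≤ ℓ (l • e - h) ∧ 0 ≤ ℓ (l • e + h)}
  κ_pos : 0 < κ
  κ_lt_one : κ < 1
  mm_e : mm e = 1
  mm_lower : ∀ h ∈ realCone S, κ * ‖h‖ ≤ mm h
  mm_star : (⇑mm : B → ℝ) ∈ closure ((fun ℓ : B →L[ℝ] ℝ => (⇑ℓ : B → ℝ)) ''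
    convexHull ℝ {q : B →L[ℝ] ℝ | ∃ c : ℝ, 0 ≤ c ∧ ∃ ℓ ∈ S, q = c • ℓ})

lemma cSmul_one (p : B × B) : cSmul 1 p = p := by
  simp [cSmul]

lemma cSmul_mul (z w : ℂ) (p : B × B) : cSmul (z * w) p = cSmul z (cSmul w p) := by
  refine Prod.ext ?_ ?_ <;>
  · simp only [cSmul, Complex.mul_re, Complex.mul_im]
    module

lemma cSmul_ofReal (r : ℝ) (p : B × B) : cSmul (r : ℂ) p = r • p := by
  simp [cSmul, Prod.smul_def]

lemma fst_le_rNorm {E : Type*} [NormedAddCommGroup E] (p : E × E) : ‖p.1‖ ≤ rNorm p :=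
  Real.le_sqrt_of_sq_le (le_add_of_nonneg_right (sq_nonneg _))

lemma snd_le_rNorm {E : Type*} [NormedAddCommGroup E] (p : E × E) : ‖p.2‖ ≤ rNorm p :=
  Real.le_sqrt_of_sq_le (le_add_of_nonneg_left (sq_nonneg _))

lemma rNorm_smul {r : ℝ} (hr : 0 ≤ r) (p : B × B) : rNorm (r • p) = r * rNorm p := by
  rw [rNorm, rNorm, Prod.smul_fst, Prod.smul_snd, norm_smul, norm_smul, Real.norm_of_nonneg hr,
    mul_pow, mul_pow, ← mul_add, Real.sqrt_mul (sq_nonneg r), Real.sqrt_sq hr]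

lemma continuous_rNorm_cSmul_exp (p : B × B) :
    Continuous fun θ : ℝ => rNorm (cSmul (exp (θ * I)) p) := by
  unfold rNorm cSmul
  fun_prop

lemma rNorm_cSmul_exp_le_cNorm (θ : ℝ) (p : B × B) :
    rNorm (cSmul (exp (θ * I)) p) ≤ cNorm p := by
  have hmem : toIcoMod Real.two_pi_pos 0 θ ∈ Icc 0 (2 * Real.pi) := by
    simpa using Ico_subset_Icc_self (toIcoMod_mem_Ico Real.two_pi_pos 0 θ)
  have hexp : exp (toIcoMod Real.two_pi_pos 0 θ * I) = exp (θ * I) := by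
    rw [eq_sub_of_add_eq (toIcoMod_add_toIcoDiv_zsmul Real.two_pi_pos 0 θ),
      Complex.ofReal_sub, Complex.ofReal_zsmul, Complex.ofReal_mul, Complex.ofReal_ofNat,
      exp_mul_I_periodic.sub_zsmul_eq]
  rw [← hexp]
  exact le_csSup (isCompact_Icc.bddAbove_image (continuous_rNorm_cSmul_exp p).continuousOn)
    ⟨_, hmem, rfl⟩

lemma cNorm_nonneg (p : B × B) : 0 ≤ cNorm p :=
  (Real.sqrt_nonneg _).trans (rNorm_cSmul_exp_le_cNorm 0 p)

lemma rNorm_cSmul_le (z : ℂ) (p : B × B) : rNorm (cSmul z p) ≤ ‖z‖ * cNorm p := by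
  calc rNorm (cSmul z p)
      = rNorm (cSmul ((‖z‖ : ℝ) : ℂ) (cSmul (exp (z.arg * I)) p)) := by
        rw [← cSmul_mul, norm_mul_exp_arg_mul_I]
    _ = ‖z‖ * rNorm (cSmul (exp (z.arg * I)) p) := by
        rw [cSmul_ofReal, rNorm_smul (norm_nonneg z)]
    _ ≤ ‖z‖ * cNorm p := by gcongr; exact rNorm_cSmul_exp_le_cNorm _ _

lemma norm_apply_le_mul_cNorm {ℓ : B × B → ℂ} (hadd : ∀ p q, ℓ (p + q) = ℓ p + ℓ q)
    (hsmul : ∀ z p, ℓ (cSmul z p) = z * ℓ p) {h₀ : B × B}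
    (hne : ∀ q, rNorm q < 1 → ℓ (h₀ + q) ≠ 0) (p : B × B) :
    ‖ℓ p‖ ≤ ‖ℓ h₀‖ * cNorm p := by
  by_contra! hlt
  have hp : ℓ p ≠ 0 :=
    norm_pos_iff.mp ((mul_nonneg (norm_nonneg _) (cNorm_nonneg p)).trans_lt hlt)
  set w : ℂ := -ℓ h₀ / ℓ p
  have hq : rNorm (cSmul w p) < 1 :=
    calc rNorm (cSmul w p) ≤ ‖w‖ * cNorm p := rNorm_cSmul_le w p
      _ = ‖ℓ h₀‖ * cNorm p / ‖ℓ p‖ := by rw [norm_div, norm_neg, div_mul_eq_mul_div]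
      _ < 1 := (div_lt_one (norm_pos_iff.mpr hp)).mpr hlt
  exact hne _ hq (by rw [hadd, hsmul, div_mul_cancel₀ _ hp, add_neg_cancel])

lemma mk_mem_complexCone {S : Set (B →L[ℝ] ℝ)} {x y : B} (hx : x ∈ realCone S)
    (hy : y ∈ realCone S) : (x, y) ∈ complexCone S :=
  ⟨1, one_ne_zero, x, hx, y, hy, (cSmul_one _).symm⟩

namespace Setup

variable (st : Setup B)

lemma exists_apply_e_pos : ∃ ℓ ∈ st.S, 0 < ℓ st.e := by
  by_contra! h
  exact st.e_mem.1 (st.separating _ fun ℓ hℓ => le_antisymm (h ℓ hℓ) (st.e_mem.2 ℓ hℓ))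

lemma exists_lt_one_smul_e_add_nonneg {w : B} (hw : ‖w‖ < 1) :
    ∃ l : ℝ, l < 1 ∧ ∀ ℓ ∈ st.S, 0 ≤ ℓ (l • st.e + w) := by
  obtain ⟨l₁, hl₁, hw₁⟩ := st.arch w
  obtain ⟨l₂, hl₂, hw₂⟩ := st.arch (-w)
  have hne : {l : ℝ | 0 ≤ l ∧ ∀ ℓ ∈ st.S,
      0 ≤ ℓ (l • st.e - w) ∧ 0 ≤ ℓ (l • st.e + w)}.Nonempty := by
    refine ⟨l₁ + l₂, by positivity, fun ℓ hℓ => ⟨?_, ?_⟩⟩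
    · rw [add_smul, add_sub_right_comm, map_add, map_smul]
      exact add_nonneg (hw₁ ℓ hℓ) (smul_nonneg hl₂ (st.e_mem.2 ℓ hℓ))
    · rw [add_comm l₁, add_smul, add_right_comm, map_add, map_smul]
      rw [sub_neg_eq_add] at hw₂
      exact add_nonneg (hw₂ ℓ hℓ) (smul_nonneg hl₁ (st.e_mem.2 ℓ hℓ))
  obtain ⟨l, ⟨-, hl⟩, hl1⟩ := exists_lt_of_csInf_lt hne ((st.norm_eq w).symm.trans_lt hw)
  exact ⟨l, hl1, fun ℓ hℓ => (hl ℓ hℓ).2⟩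

lemma add_mem_realCone {w : B} (hw : ‖w‖ < 1) : st.e + w ∈ realCone st.S := by
  obtain ⟨l, hl1, hl⟩ := st.exists_lt_one_smul_e_add_nonneg hw
  have hsplit : ∀ ℓ : B →L[ℝ] ℝ, ℓ (st.e + w) = ℓ (l • st.e + w) + (1 - l) * ℓ st.e := by
    intro ℓ
    simp only [map_add, map_smul, smul_eq_mul]; ring
  obtain ⟨ℓ₀, hℓ₀, he⟩ := st.exists_apply_e_pos
  refine ⟨fun h0 => ?_, fun ℓ hℓ => ?_⟩
  · have : 0 < ℓ₀ (st.e + w) := by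
      rw [hsplit]; nlinarith [hl ℓ₀ hℓ₀]
    simp [h0] at this
  · rw [hsplit]; nlinarith [hl ℓ hℓ, st.e_mem.2 ℓ hℓ]

lemma add_mem_complexCone {q : B × B} (hq : rNorm q < 1) :
    (st.e, st.e) + q ∈ complexCone st.S :=
  mk_mem_complexCone (st.add_mem_realCone ((fst_le_rNorm q).trans_lt hq))
    (st.add_mem_realCone ((snd_le_rNorm q).trans_lt hq))

end Setup

theorem dual_functional_norm_bound_general {B : Type*} [NormedAddCommGroup B] [NormedSpace ℝ B]
    (st : Setup B) :
    ∀ ℓ ∈ dualComplexCone st.S,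
      sSup {r : ℝ | ∃ p : B × B, cNorm p ≤ 1 ∧ r = ‖ℓ p‖} ≤
        Real.sqrt 2 * ‖ℓ (st.e, 0)‖ := by
  rintro ℓ ⟨⟨hadd, hsmul, -⟩, hne⟩
  have hbound : ∀ p, ‖ℓ p‖ ≤ ‖ℓ (st.e, st.e)‖ * cNorm p :=
    norm_apply_le_mul_cNorm hadd hsmul fun q hq => hne _ (st.add_mem_complexCone hq)
  have hee : ‖ℓ (st.e, st.e)‖ = Real.sqrt 2 * ‖ℓ (st.e, 0)‖ := by
    have : ((st.e, st.e) : B × B) = cSmul (1 + 1 * I) (st.e, 0) := by simp [cSmul]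
    rw [this, hsmul, norm_mul, ← Complex.ofReal_one, norm_add_mul_I]
    norm_num
  refine Real.sSup_le ?_ (by positivity)
  rintro r ⟨p, hp, rfl⟩
  calc ‖ℓ p‖ ≤ ‖ℓ (st.e, st.e)‖ * cNorm p := hbound p
    _ ≤ ‖ℓ (st.e, st.e)‖ := mul_le_of_le_one_right (norm_nonneg _) hp
    _ = Real.sqrt 2 * ‖ℓ (st.e, 0)‖ := hee

/-- **Lemma 5.7.** Every `ℓ ∈ 𝒞'_ℂ` satisfies `‖ℓ‖' ≤ √2 |ℓ(𝕖)|`, where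
`‖ℓ‖' = sup_{‖h‖ ≤ 1} |ℓ(h)|` is the operator norm on the complexification. -/
theorem dual_functional_norm_bound {B : Type*} [NormedAddCommGroup B] [NormedSpace ℝ B]
    [CompleteSpace B] (st : Setup B) :
    ∀ ℓ ∈ dualComplexCone st.S,
      sSup {r : ℝ | ∃ p : B × B, cNorm p ≤ 1 ∧ r = ‖ℓ p‖} ≤
        Real.sqrt 2 * ‖ℓ (st.e, 0)‖ :=
  dual_functional_norm_bound_general st

end ConeSetup
end

section
/- In the real/complex cone setup, if h, g ∈ 𝒞_ℂ satisfy 𝕞(h) = 𝕞(g) and |𝕞(g)| = 1, then ‖h − g‖ ≤ (√2/κ) δ_𝒞(h,g). -/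
/-!
For `ℓ ∈ S` with `ℓ 𝕖 > 0` one has `κ ℓ ≤ ℓ(𝕖) 𝕞` on `𝒞_ℝ`, so the complexified functionals
`L_s = ℓ(𝕖) 𝕞 + s ℓ` belong to `𝒞'_ℂ` for every `s` in the half-plane `Re s > -κ`. A branch of
`s ↦ log (L_s h / L_s g)` is then holomorphic on that half-plane, vanishes at `0` and has real
part at most `δ = δ_𝒞(h,g)`. The Borel–Carathéodory inequality, moved to the half-plane by
`z ↦ 2κz / (1 - z)`, bounds its derivative at `0`, which is `ℓ(h - g) / (ℓ(𝕖) 𝕞(g))`, by `δ/κ`.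
Hence `|ℓ x|, |ℓ y| ≤ (δ/κ) ℓ(𝕖)` for `h - g = (x, y)`, that is `‖x‖, ‖y‖ ≤ δ/κ`. Multiplying `h`
and `g` by `e^{iθ}` changes neither the hypotheses nor `δ`, so the same bound holds for every
rotation of `h - g`, and `‖h - g‖ ≤ √2 δ/κ`.
-/

open Complex Set ENNReal

open Metric Filter Topology ComplexConjugate

namespace Complex

theorem norm_deriv_le_of_re_le_on_ball {f : ℂ → ℂ} {M R : ℝ} (hM : 0 < M) (hR : 0 < R)
    (hf : DifferentiableOn ℂ f (ball 0 R)) (hre : MapsTo f (ball 0 R) {z | z.re ≤ M})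
    (hf0 : f 0 = 0) : ‖deriv f 0‖ ≤ 2 * M / R := by
  have hslope : Tendsto (dslope f 0) (𝓝[≠] 0) (𝓝 (deriv f 0)) := by
    have := continuousAt_dslope_same.2 (hf.differentiableAt (ball_mem_nhds 0 hR))
    simpa [dslope_same] using this.tendsto.mono_left nhdsWithin_le_nhds
  have hbound : Tendsto (fun z : ℂ => 2 * M / (R - ‖z‖)) (𝓝[≠] 0) (𝓝 (2 * M / R)) := by
    have : ContinuousAt (fun z : ℂ => 2 * M / (R - ‖z‖)) 0 :=
      continuousAt_const.div (continuousAt_const.sub continuous_norm.continuousAt)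
        (by simp [hR.ne'])
    simpa using this.tendsto.mono_left nhdsWithin_le_nhds
  refine le_of_tendsto_of_tendsto hslope.norm hbound ?_
  filter_upwards [self_mem_nhdsWithin, nhdsWithin_le_nhds (ball_mem_nhds 0 hR)] with z hz hzR
  rw [dslope_of_ne _ hz, slope_def_module, hf0, sub_zero, sub_zero, norm_smul, norm_inv,
    inv_mul_le_iff₀ (norm_pos_iff.2 hz)]
  calc ‖f z‖ ≤ 2 * M * ‖z‖ / (R - ‖z‖) := borelCaratheodory_zero hM hf hre hR hzR hf0
    _ = ‖z‖ * (2 * M / (R - ‖z‖)) := by ring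

theorem neg_lt_re_two_mul_div_one_sub {κ : ℝ} (hκ : 0 < κ) {z : ℂ} (hz : ‖z‖ < 1) :
    -κ < (2 * κ * z / (1 - z)).re := by
  have hz1 : 0 < normSq (1 - z) := normSq_pos.2 fun h ↦ by simp [← sub_eq_zero.1 h] at hz
  have hns : 0 < 1 - normSq z := by
    rw [← Complex.sq_norm]; nlinarith [norm_nonneg z]
  have key : (2 * κ * z / (1 - z)).re + κ = κ * (1 - normSq z) / normSq (1 - z) := by
    rw [div_re]
    field_simp
    simp only [mul_re, re_ofNat, ofReal_re, im_ofNat, ofReal_im, mul_zero, sub_zero, mul_im,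
      zero_mul, add_zero, sub_re, one_re, sub_im, one_im, zero_sub, mul_neg, normSq_apply,
      neg_mul, neg_neg]
    ring
  have : 0 < κ * (1 - normSq z) / normSq (1 - z) := by positivity
  linarith

theorem norm_deriv_le_of_re_le_on_halfPlane {f : ℂ → ℂ} {κ M : ℝ} (hκ : 0 < κ)
    (hf : DifferentiableOn ℂ f {s | -κ < s.re}) (hre : ∀ s, -κ < s.re → (f s).re ≤ M)
    (hf0 : f 0 = 0) : ‖deriv f 0‖ ≤ M / κ := by
  set φ : ℂ → ℂ := fun z ↦ 2 * κ * z / (1 - z)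
  have hφ : MapsTo φ (ball 0 1) {s | -κ < s.re} := fun z hz ↦
    neg_lt_re_two_mul_div_one_sub hκ (mem_ball_zero_iff.1 hz)
  have hφd : DifferentiableOn ℂ φ (ball 0 1) := by
    refine DifferentiableOn.div (by fun_prop) (by fun_prop) fun z hz h ↦ ?_
    simp [← sub_eq_zero.1 h] at hz
  have hφ0 : φ 0 = 0 := by simp [φ]
  have hφ' : HasDerivAt φ (2 * κ) 0 := by
    have := ((hasDerivAt_id' (0 : ℂ)).const_mul (2 * (κ : ℂ))).div
      ((hasDerivAt_id' (0 : ℂ)).const_sub 1) (by simp)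
    simp only [sub_zero, mul_one, mul_zero, zero_mul, one_pow, div_one] at this
    exact this
  have hH : {s : ℂ | -κ < s.re} ∈ 𝓝 0 :=
    (isOpen_lt continuous_const continuous_re).mem_nhds (by simpa using hκ)
  have hderiv : deriv (f ∘ φ) 0 = deriv f 0 * (2 * κ) := by
    have hf' := (hf.differentiableAt hH).hasDerivAt
    rw [← hφ0] at hf'
    simpa [hφ0] using (hf'.comp 0 hφ').deriv
  have hM : 0 ≤ M := by simpa [hf0] using hre 0 (by simpa using hκ)
  rw [le_div_iff₀ hκ]
  refine le_of_forall_gt_imp_ge_of_dense fun M' hM' ↦ ?_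
  have := norm_deriv_le_of_re_le_on_ball (hM.trans_lt hM') one_pos (hf.comp hφd hφ)
    (fun z hz ↦ (hre _ (hφ hz)).trans hM'.le) (by simp [hφ0, hf0])
  rw [hderiv, norm_mul] at this
  simp only [norm_mul, norm_ofNat, norm_real, Real.norm_eq_abs, abs_of_pos hκ, div_one] at this
  linarith

theorem exists_re_mul_pos_of_add_mul_ne_zero {κ : ℝ} (hκ : 0 < κ) {a b : ℂ}
    (h : ∀ s : ℂ, -κ < s.re → a + s * b ≠ 0) :
    ∃ ω : ℂ, ∀ s : ℂ, -κ < s.re → 0 < (ω * (a + s * b)).re := by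
  rcases eq_or_ne b 0 with rfl | hb
  · have ha : a ≠ 0 := by simpa using h 0 (by simpa using hκ)
    refine ⟨conj a, fun s _ ↦ ?_⟩
    simpa [mul_comm (conj a), mul_conj] using normSq_pos.2 ha
  · have hzero : (-a / b).re ≤ -κ := by
      by_contra! hlt
      exact h _ hlt (by field_simp; ring)
    refine ⟨conj b, fun s hs ↦ ?_⟩
    have : conj b * (a + s * b) = (s - -a / b) * normSq b := by
      rw [← mul_conj]; field_simp; ring
    rw [this, re_mul_ofReal, sub_re]
    exact mul_pos (by linarith) (normSq_pos.2 hb)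

theorem exists_log_of_add_mul_ne_zero {κ : ℝ} (hκ : 0 < κ) {a b : ℂ}
    (h : ∀ s : ℂ, -κ < s.re → a + s * b ≠ 0) :
    ∃ L : ℂ → ℂ, ∀ s : ℂ, -κ < s.re →
      HasDerivAt L (b / (a + s * b)) s ∧ (L s).re = Real.log ‖a + s * b‖ := by
  obtain ⟨ω, hω⟩ := exists_re_mul_pos_of_add_mul_ne_zero hκ h
  have hω0 : ω ≠ 0 := by rintro rfl; simpa using hω 0 (by simpa using hκ)
  refine ⟨fun s ↦ log (ω * (a + s * b)) - Real.log ‖ω‖, fun s hs ↦ ⟨?_, ?_⟩⟩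
  · have hlin : HasDerivAt (fun t : ℂ ↦ ω * (a + t * b)) (ω * b) s := by
      simpa using (((hasDerivAt_id' s).mul_const b).const_add a).const_mul ω
    have := (hlin.clog (mem_slitPlane_iff.2 (Or.inl (hω s hs)))).sub_const (Real.log ‖ω‖ : ℂ)
    rwa [mul_div_mul_left _ _ hω0] at this
  · simp [log_re, Real.log_mul (norm_ne_zero_iff.2 hω0) (norm_ne_zero_iff.2 (h s hs))]

theorem norm_sub_le_of_log_norm_div_le {κ δ : ℝ} (hκ : 0 < κ) {a b₁ b₂ : ℂ}
    (h₁ : ∀ s : ℂ, -κ < s.re → a + s * b₁ ≠ 0) (h₂ : ∀ s : ℂ, -κ < s.re → a + s * b₂ ≠ 0)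
    (hδ : ∀ s : ℂ, -κ < s.re → Real.log (‖a + s * b₁‖ / ‖a + s * b₂‖) ≤ δ) :
    ‖b₁ - b₂‖ ≤ δ * ‖a‖ / κ := by
  have h0 : -κ < (0 : ℂ).re := by simpa using hκ
  have ha : a ≠ 0 := by simpa using h₁ 0 h0
  obtain ⟨L₁, hL₁⟩ := exists_log_of_add_mul_ne_zero hκ h₁
  obtain ⟨L₂, hL₂⟩ := exists_log_of_add_mul_ne_zero hκ h₂
  -- a branch of `s ↦ log ((a + s * b₁) / (a + s * b₂))` vanishing at `0`
  set f : ℂ → ℂ := fun s ↦ L₁ s - L₂ s - (L₁ 0 - L₂ 0)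
  have hf : ∀ s : ℂ, -κ < s.re → HasDerivAt f (b₁ / (a + s * b₁) - b₂ / (a + s * b₂)) s :=
    fun s hs ↦ ((hL₁ s hs).1.sub (hL₂ s hs).1).sub_const _
  have hre0 : (L₁ 0).re = (L₂ 0).re := by simp [(hL₁ 0 h0).2, (hL₂ 0 h0).2]
  have hre : ∀ s : ℂ, -κ < s.re → (f s).re ≤ δ := fun s hs ↦ by
    simpa [f, (hL₁ s hs).2, (hL₂ s hs).2, hre0,
      Real.log_div (norm_ne_zero_iff.2 (h₁ s hs)) (norm_ne_zero_iff.2 (h₂ s hs))] using hδ s hs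
  have hbound := norm_deriv_le_of_re_le_on_halfPlane hκ
    (fun s hs ↦ (hf s hs).differentiableAt.differentiableWithinAt) hre (by simp [f])
  rw [(hf 0 h0).deriv] at hbound
  simp only [zero_mul, add_zero, ← sub_div, norm_div] at hbound
  rwa [div_le_div_iff₀ (norm_pos_iff.2 ha) hκ, ← le_div_iff₀ hκ] at hbound

theorem add_mul_ne_zero_of_mul_normSq_le {κ : ℝ} {z w s : ℂ} (hz : z ≠ 0)
    (hzw : κ * normSq w ≤ (conj w * z).re) (hs : -κ < s.re) : z + s * w ≠ 0 := by
  rcases eq_or_ne w 0 with rfl | hw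
  · simpa using hz
  intro h
  have hre : (conj w * z).re = -s.re * normSq w := by
    rw [show z = -s * w by linear_combination h, mul_left_comm, ← normSq_eq_conj_mul_self,
      re_mul_ofReal, neg_re]
  nlinarith [normSq_pos.2 hw]

end Complex

namespace ConeSetup

variable {B : Type*} [NormedAddCommGroup B]

lemma rNorm_le_sqrt_two_mul {p : B × B} {L : ℝ} (h₁ : ‖p.1‖ ≤ L) (h₂ : ‖p.2‖ ≤ L) :
    rNorm p ≤ √2 * L := by
  have hL : 0 ≤ L := (norm_nonneg _).trans h₁
  rw [rNorm, ← Real.sqrt_sq hL, ← Real.sqrt_mul zero_le_two]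
  gcongr
  nlinarith [norm_nonneg p.1, norm_nonneg p.2]

variable [NormedSpace ℝ B]

lemma cext_add (ℓ : B →L[ℝ] ℝ) (p q : B × B) : cext ℓ (p + q) = cext ℓ p + cext ℓ q := by
  simp only [cext, Prod.fst_add, Prod.snd_add, map_add]
  push_cast
  ring

lemma cext_sub (ℓ : B →L[ℝ] ℝ) (p q : B × B) : cext ℓ (p - q) = cext ℓ p - cext ℓ q := by
  simp only [cext, Prod.fst_sub, Prod.snd_sub, map_sub]
  push_cast
  ring

lemma cext_cSmul (ℓ : B →L[ℝ] ℝ) (z : ℂ) (p : B × B) : cext ℓ (cSmul z p) = z * cext ℓ p := by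
  apply Complex.ext <;> simp [cext, cSmul]

lemma cext_smul_left (c : ℝ) (ℓ : B →L[ℝ] ℝ) (p : B × B) : cext (c • ℓ) p = c * cext ℓ p := by
  simp only [cext, smul_apply, smul_eq_mul, Complex.ofReal_mul]
  ring

lemma continuous_cext (ℓ : B →L[ℝ] ℝ) : Continuous (cext ℓ) := by
  unfold cext
  fun_prop

lemma cext_re (ℓ : B →L[ℝ] ℝ) (p : B × B) : (cext ℓ p).re = ℓ p.1 := by
  simp [cext]

lemma cext_im (ℓ : B →L[ℝ] ℝ) (p : B × B) : (cext ℓ p).im = ℓ p.2 := by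
  simp [cext]

lemma cSmul_sub (z : ℂ) (p q : B × B) : cSmul z (p - q) = cSmul z p - cSmul z q := by
  ext <;> simp only [cSmul, Prod.fst_sub, Prod.snd_sub, smul_sub] <;> abel

lemma cNorm_le {p : B × B} {C : ℝ} (hC : 0 ≤ C)
    (h : ∀ θ : ℝ, rNorm (cSmul (Complex.exp (θ * Complex.I)) p) ≤ C) : cNorm p ≤ C :=
  Real.sSup_le (by rintro _ ⟨θ, -, rfl⟩; exact h θ) hC

section Cones

variable {S : Set (B →L[ℝ] ℝ)}

lemma cSmul_mem_complexCone {p : B × B} (hp : p ∈ complexCone S) {z : ℂ} (hz : z ≠ 0) :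
    cSmul z p ∈ complexCone S := by
  obtain ⟨w, hw, x, hx, y, hy, rfl⟩ := hp
  refine ⟨z * w, mul_ne_zero hz hw, x, hx, y, hy, ?_⟩
  ext <;> simp only [cSmul, Complex.mul_re, Complex.mul_im] <;> module

lemma gaugeSet_cSmul (h g : B × B) {z : ℂ} (hz : z ≠ 0) :
    gaugeSet S (cSmul z h) (cSmul z g) = gaugeSet S h g := by
  ext w
  refine exists_congr fun ℓ ↦ and_congr_right fun hℓ ↦ ?_
  rw [hℓ.1.2.1, hℓ.1.2.1, mul_div_mul_left _ _ hz]

lemma log_norm_div_le_toReal_deltaGauge {h g : B × B} (htop : deltaGauge S h g ≠ ⊤) {z w : ℂ}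
    (hz : z ∈ gaugeSet S h g) (hw : w ∈ gaugeSet S h g) :
    Real.log (‖z‖ / ‖w‖) ≤ (deltaGauge S h g).toReal := by
  rw [← ENNReal.ofReal_le_iff_le_toReal htop]
  exact le_iSup₂_of_le z hz (le_iSup₂_of_le (f := fun w _ ↦ ENNReal.ofReal (Real.log (‖z‖ / ‖w‖)))
    w hw le_rfl)

lemma add_mul_cext_mem_dualComplexCone {κ : ℝ} {p q : B →L[ℝ] ℝ}
    (hp : ∀ x ∈ realCone S, 0 < p x) (hq : ∀ x ∈ realCone S, 0 ≤ q x ∧ κ * q x ≤ p x)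
    {s : ℂ} (hs : -κ < s.re) : (fun v ↦ cext p v + s * cext q v) ∈ dualComplexCone S := by
  refine ⟨⟨fun v w ↦ ?_, fun z v ↦ ?_, ?_⟩, ?_⟩
  · simp only [cext_add]
    ring
  · simp only [cext_cSmul]
    ring
  · exact (continuous_cext p).add (continuous_const.mul (continuous_cext q))
  rintro _ ⟨z, hz, x, hx, y, hy, rfl⟩
  dsimp only
  rw [cext_cSmul, cext_cSmul, mul_left_comm, ← mul_add]
  refine mul_ne_zero hz (Complex.add_mul_ne_zero_of_mul_normSq_le ?_ ?_ hs)
  · exact fun h0 ↦ (hp x hx).ne' (by simpa [cext_re] using congrArg Complex.re h0)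
  · obtain ⟨hqx, hpx⟩ := hq x hx
    obtain ⟨hqy, hpy⟩ := hq y hy
    simp only [cext, Complex.normSq_add_mul_I, Complex.mul_re, Complex.conj_re, Complex.conj_im,
      Complex.add_re, Complex.add_im, Complex.ofReal_re, Complex.ofReal_im, Complex.mul_im,
      Complex.I_re, Complex.I_im]
    nlinarith [mul_le_mul_of_nonneg_left hpx hqx, mul_le_mul_of_nonneg_left hpy hqy]

lemma norm_cext_sub_le_of_gauge {κ δ : ℝ} (hκ : 0 < κ) {p q : B →L[ℝ] ℝ}
    (hp : ∀ x ∈ realCone S, 0 < p x) (hq : ∀ x ∈ realCone S, 0 ≤ q x ∧ κ * q x ≤ p x)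
    {h g : B × B} (hh : h ∈ complexCone S) (hg : g ∈ complexCone S)
    (hpg : cext p h = cext p g)
    (hδ : ∀ z ∈ gaugeSet S h g, ∀ w ∈ gaugeSet S h g, Real.log (‖z‖ / ‖w‖) ≤ δ) :
    ‖cext q h - cext q g‖ ≤ δ * ‖cext p g‖ / κ := by
  set L : ℂ → B × B → ℂ := fun s v ↦ cext p v + s * cext q v
  have hL : ∀ s : ℂ, -κ < s.re → L s ∈ dualComplexCone S := fun s hs ↦
    add_mul_cext_mem_dualComplexCone hp hq hs
  have hLh : ∀ s : ℂ, -κ < s.re → L s h = cext p g + s * cext q h := fun s _ ↦ by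
    simp only [L, hpg]
  have hpg0 : cext p g ≠ 0 := by simpa [L] using (hL 0 (by simpa using hκ)).2 g hg
  refine Complex.norm_sub_le_of_log_norm_div_le hκ (fun s hs ↦ hLh s hs ▸ (hL s hs).2 h hh)
    (fun s hs ↦ (hL s hs).2 g hg) fun s hs ↦ ?_
  have h1 : (1 : ℂ) ∈ gaugeSet S h g := ⟨L 0, hL 0 (by simpa using hκ), by simp [L, hpg, hpg0]⟩
  simpa [← hLh s hs, L] using hδ _ ⟨L s, hL s hs, rfl⟩ 1 h1

end Cones

namespace Setup

variable (st : Setup B)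

lemma norm_eq_sInf_abs (v : B) :
    ‖v‖ = sInf {l : ℝ | 0 ≤ l ∧ ∀ ℓ ∈ st.S, |ℓ v| ≤ l * ℓ st.e} := by
  rw [st.norm_eq v]
  congr 1
  ext l
  refine and_congr_right fun _ ↦ forall₂_congr fun ℓ _ ↦ ?_
  simp only [map_sub, map_add, map_smul, smul_eq_mul, abs_le]
  constructor <;> rintro ⟨h₁, h₂⟩ <;> constructor <;> linarith

lemma exists_abs_apply_le (v : B) : ∃ l, 0 ≤ l ∧ ∀ ℓ ∈ st.S, |ℓ v| ≤ l * ℓ st.e := by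
  obtain ⟨l₁, hl₁, h₁⟩ := st.arch v
  obtain ⟨l₂, hl₂, h₂⟩ := st.arch (-v)
  refine ⟨l₁ + l₂, add_nonneg hl₁ hl₂, fun ℓ hℓ ↦ ?_⟩
  have he := st.e_mem.2 ℓ hℓ
  have h₁ := h₁ ℓ hℓ
  have h₂ := h₂ ℓ hℓ
  simp only [map_sub, map_smul, smul_eq_mul, sub_neg_eq_add, map_add] at h₁ h₂
  rw [abs_le]
  constructor <;> nlinarith

lemma abs_apply_le_norm_mul {ℓ : B →L[ℝ] ℝ} (hℓ : ℓ ∈ st.S) (v : B) :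
    |ℓ v| ≤ ‖v‖ * ℓ st.e := by
  obtain ⟨l, hl⟩ := st.exists_abs_apply_le v
  rcases (st.e_mem.2 ℓ hℓ).eq_or_lt with he | he
  · simpa [← he] using hl.2 ℓ hℓ
  · rw [st.norm_eq_sInf_abs, ← div_le_iff₀ he]
    exact le_csInf ⟨l, hl⟩ fun b hb ↦ (div_le_iff₀ he).2 (hb.2 ℓ hℓ)

lemma norm_le_of_forall_abs_apply_le {v : B} {L : ℝ} (hL : 0 ≤ L)
    (h : ∀ ℓ ∈ st.S, |ℓ v| ≤ L * ℓ st.e) : ‖v‖ ≤ L := by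
  rw [st.norm_eq_sInf_abs]
  exact csInf_le ⟨0, fun _ hb ↦ hb.1⟩ ⟨hL, h⟩

lemma mm_pos {x : B} (hx : x ∈ realCone st.S) : 0 < st.mm x :=
  (mul_pos st.κ_pos (norm_pos_iff.2 hx.1)).trans_le (st.mm_lower x hx)

variable {st} {h g : B × B} {δ : ℝ}

lemma norm_cext_sub_le {ℓ : B →L[ℝ] ℝ} (hℓ : ℓ ∈ st.S) (hh : h ∈ complexCone st.S)
    (hg : g ∈ complexCone st.S) (hm : cext st.mm h = cext st.mm g)
    (hδ : ∀ z ∈ gaugeSet st.S h g, ∀ w ∈ gaugeSet st.S h g, Real.log (‖z‖ / ‖w‖) ≤ δ) :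
    ‖cext ℓ (h - g)‖ ≤ δ * ‖cext st.mm g‖ / st.κ * ℓ st.e := by
  rcases (st.e_mem.2 ℓ hℓ).eq_or_lt with he | he
  · have hℓ0 : ∀ v, ℓ v = 0 := fun v ↦
      abs_nonpos_iff.1 (by simpa [← he] using st.abs_apply_le_norm_mul hℓ v)
    simp [cext, hℓ0]
  have hq : ∀ x ∈ realCone st.S, 0 ≤ ℓ x ∧ st.κ * ℓ x ≤ (ℓ st.e • st.mm) x := fun x hx ↦
    ⟨hx.2 ℓ hℓ, calc
      st.κ * ℓ x ≤ st.κ * (‖x‖ * ℓ st.e) :=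
        mul_le_mul_of_nonneg_left ((le_abs_self _).trans (st.abs_apply_le_norm_mul hℓ x))
          st.κ_pos.le
      _ ≤ ℓ st.e * st.mm x := by nlinarith [st.mm_lower x hx]⟩
  have := norm_cext_sub_le_of_gauge st.κ_pos (fun x hx ↦ mul_pos he (st.mm_pos hx)) hq hh hg
    (by rw [cext_smul_left, cext_smul_left, hm]) hδ
  rw [cext_smul_left, norm_mul, Complex.norm_real, Real.norm_of_nonneg he.le] at this
  rw [cext_sub]
  convert this using 1
  ring

lemma norm_fst_sub_le_and_norm_snd_sub_le (hh : h ∈ complexCone st.S)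
    (hg : g ∈ complexCone st.S) (hm : cext st.mm h = cext st.mm g) (hδ0 : 0 ≤ δ)
    (hδ : ∀ z ∈ gaugeSet st.S h g, ∀ w ∈ gaugeSet st.S h g, Real.log (‖z‖ / ‖w‖) ≤ δ) :
    ‖(h - g).1‖ ≤ δ * ‖cext st.mm g‖ / st.κ ∧ ‖(h - g).2‖ ≤ δ * ‖cext st.mm g‖ / st.κ := by
  have hL : 0 ≤ δ * ‖cext st.mm g‖ / st.κ := by have := st.κ_pos; positivity
  have hbound := fun ℓ (hℓ : ℓ ∈ st.S) ↦ norm_cext_sub_le hℓ hh hg hm hδ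
  refine ⟨st.norm_le_of_forall_abs_apply_le hL fun ℓ hℓ ↦ ?_,
    st.norm_le_of_forall_abs_apply_le hL fun ℓ hℓ ↦ ?_⟩
  · exact (cext_re ℓ (h - g) ▸ Complex.abs_re_le_norm _).trans (hbound ℓ hℓ)
  · exact (cext_im ℓ (h - g) ▸ Complex.abs_im_le_norm _).trans (hbound ℓ hℓ)

lemma rNorm_cSmul_sub_le (hh : h ∈ complexCone st.S) (hg : g ∈ complexCone st.S)
    (hm : cext st.mm h = cext st.mm g) (htop : deltaGauge st.S h g ≠ ⊤) {z : ℂ} (hz : ‖z‖ = 1) :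
    rNorm (cSmul z (h - g)) ≤ √2 * ((deltaGauge st.S h g).toReal * ‖cext st.mm g‖ / st.κ) := by
  have hz0 : z ≠ 0 := norm_ne_zero_iff.1 (hz ▸ one_ne_zero)
  have := norm_fst_sub_le_and_norm_snd_sub_le (cSmul_mem_complexCone hh hz0)
    (cSmul_mem_complexCone hg hz0)
    (by rw [cext_cSmul, cext_cSmul, hm]) ENNReal.toReal_nonneg fun _ hx _ hy ↦
      log_norm_div_le_toReal_deltaGauge htop (gaugeSet_cSmul h g hz0 ▸ hx)
        (gaugeSet_cSmul h g hz0 ▸ hy)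
  rw [← cSmul_sub, cext_cSmul, norm_mul, hz, one_mul] at this
  exact rNorm_le_sqrt_two_mul this.1 this.2

end Setup

theorem norm_diff_le_deltaGauge_general {B : Type*} [NormedAddCommGroup B] [NormedSpace ℝ B]
    (st : Setup B) :
    ∀ h ∈ complexCone st.S, ∀ g ∈ complexCone st.S,
      cext st.mm h = cext st.mm g → ‖cext st.mm g‖ = 1 →
        ENNReal.ofReal (cNorm (h - g)) ≤
          ENNReal.ofReal (Real.sqrt 2 / st.κ) * deltaGauge st.S h g := by
  intro h hh g hg hm hg1
  have hκ := st.κ_pos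
  rcases eq_or_ne (deltaGauge st.S h g) ⊤ with htop | htop
  · simp [htop, ENNReal.mul_top, hκ]
  set δ := (deltaGauge st.S h g).toReal
  have hrot (θ : ℝ) : rNorm (cSmul (Complex.exp (θ * Complex.I)) (h - g)) ≤ √2 * (δ / st.κ) := by
    simpa [hg1] using st.rNorm_cSmul_sub_le hh hg hm htop (Complex.norm_exp_ofReal_mul_I θ)
  calc ENNReal.ofReal (cNorm (h - g)) ≤ ENNReal.ofReal (√2 * (δ / st.κ)) :=
        ENNReal.ofReal_le_ofReal (cNorm_le (by positivity) hrot)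
    _ = ENNReal.ofReal (Real.sqrt 2 / st.κ) * deltaGauge st.S h g := by
        rw [← ENNReal.ofReal_toReal htop, ← ENNReal.ofReal_mul (by positivity),
          div_mul_eq_mul_div, mul_div_assoc]

/-- **Lemma 5.12.** If `h, g ∈ 𝒞_ℂ` with `𝕞(h) = 𝕞(g)` and `|𝕞(g)| = 1`, then
`‖h − g‖ ≤ (√2/κ) δ_𝒞(h,g)`. -/
theorem norm_diff_le_deltaGauge {B : Type*} [NormedAddCommGroup B] [NormedSpace ℝ B]
    [CompleteSpace B] (st : Setup B) :
    ∀ h ∈ complexCone st.S, ∀ g ∈ complexCone st.S,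
      cext st.mm h = cext st.mm g → ‖cext st.mm g‖ = 1 →
        ENNReal.ofReal (cNorm (h - g)) ≤
          ENNReal.ofReal (Real.sqrt 2 / st.κ) * deltaGauge st.S h g :=
  norm_diff_le_deltaGauge_general st

end ConeSetup
end
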